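/- arXiv:0910.2453 — 5 statements merged into one kernel-verified Lean document; each statement's English description precedes it below -/
import Mathlib

section
/- Let f₁,…,f_N ∈ L²(ℝ^d) ∩ L^∞(ℝ^d) with ‖f_i‖_∞ < 1/2 for all i. Then the N×N matrix A with entries a_{ij} = -∫_{ℝ^d} log(1 - conj(f_i(x)) f_j(x)) dx is positive semidefinite. -/
/-!
At a point where all `‖f i x‖ < 1`, the series `-log (1 - w) = ∑_{k ≥ 1} w ^ k / k` writes the
matrix `-log (1 - conj (f i x) * f j x)` as a convergent sum of the positive semidefinite rank-one
matrices `k⁻¹ • vecMulVec (star (f x ^ k)) (f x ^ k)`. Positive semidefiniteness survives limits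
and integration; the entries are integrable because `‖log (1 - w)‖ ≤ 3/2 ‖w‖` for `‖w‖ ≤ 1/2` and
`conj (f i) * f j` is integrable for `f i, f j ∈ L²`.
-/

open MeasureTheory Matrix
open scoped ENNReal ComplexOrder

namespace Matrix

variable {ι α n 𝕜 : Type*} [Fintype n] [RCLike 𝕜]

theorem PosSemidef.of_hasSum {A : ι → Matrix n n 𝕜} {M : Matrix n n 𝕜} (hM : HasSum A M)
    (hA : ∀ k, (A k).PosSemidef) : M.PosSemidef := by
  refine posSemidef_iff_dotProduct_mulVec.2 ⟨?_, fun v => ?_⟩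
  · refine hM.matrix_conjTranspose.unique ?_
    simpa only [fun k => (hA k).isHermitian.eq] using hM
  · let q : Matrix n n 𝕜 →+ 𝕜 :=
      AddMonoidHom.mk' (fun B => star v ⬝ᵥ (B *ᵥ v)) fun B C => by
        simp only [add_mulVec, dotProduct_add]
    have hq : Continuous q :=
      continuous_const.dotProduct (continuous_id.matrix_mulVec continuous_const)
    exact (hM.map q hq).nonneg fun k => (hA k).dotProduct_mulVec_nonneg v

theorem PosSemidef.integral [MeasurableSpace α] {μ : Measure α} {A : α → Matrix n n 𝕜}
    (hA : ∀ i j, Integrable (fun x => A x i j) μ) (hpos : ∀ᵐ x ∂μ, (A x).PosSemidef) :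
    (of fun i j => ∫ x, A x i j ∂μ).PosSemidef := by
  refine posSemidef_iff_dotProduct_mulVec.2 ⟨?_, fun v => ?_⟩
  · ext i j
    rw [conjTranspose_apply, of_apply, of_apply, RCLike.star_def, ← integral_conj]
    refine integral_congr_ae ?_
    filter_upwards [hpos] with x hx
    exact hx.isHermitian.apply i j
  · have hquad : star v ⬝ᵥ ((of fun i j => ∫ x, A x i j ∂μ) *ᵥ v)
        = ∫ x, star v ⬝ᵥ (A x *ᵥ v) ∂μ := by
      simp only [dotProduct, mulVec, of_apply, Finset.mul_sum]
      rw [integral_finsetSum _ fun i _ => integrable_finsetSum _ fun j _ =>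
        ((hA i j).mul_const _).const_mul _]
      refine Finset.sum_congr rfl fun i _ => ?_
      rw [integral_finsetSum _ fun j _ => ((hA i j).mul_const _).const_mul _]
      simp only [integral_const_mul, integral_mul_const]
    rw [hquad]
    refine integral_nonneg_of_ae ?_
    filter_upwards [hpos] with x hx
    exact hx.dotProduct_mulVec_nonneg v

end Matrix

section NegLogKernel

variable {n : Type*} {z : n → ℂ}

theorem hasSum_inv_smul_vecMulVec_pow (hz : ∀ i, ‖z i‖ < 1) :
    HasSum (fun k : ℕ => (k : ℂ)⁻¹ • vecMulVec (star (z ^ k)) (z ^ k))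
      (of fun i j => -Complex.log (1 - (starRingEnd ℂ) (z i) * z j)) := by
  refine Pi.hasSum.2 fun i => Pi.hasSum.2 fun j => ?_
  have hw : ‖(starRingEnd ℂ) (z i) * z j‖ < 1 := by
    rw [norm_mul, Complex.norm_conj]
    exact mul_lt_one_of_nonneg_of_lt_one_left (norm_nonneg _) (hz i) (hz j).le
  -- the `k = 0` terms vanish on both sides, as `(0 : ℂ)⁻¹ = 0`
  convert Complex.hasSum_taylorSeries_neg_log hw using 1
  · ext k
    simp [vecMulVec_apply, mul_pow, div_eq_inv_mul]
  · rfl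

theorem posSemidef_neg_log_one_sub_conj_mul [Fintype n] (hz : ∀ i, ‖z i‖ < 1) :
    (of fun i j => -Complex.log (1 - (starRingEnd ℂ) (z i) * z j)).PosSemidef :=
  PosSemidef.of_hasSum (hasSum_inv_smul_vecMulVec_pow hz) fun k =>
    (posSemidef_vecMulVec_star_self _).smul (by positivity)

end NegLogKernel

theorem norm_log_one_sub_le {w : ℂ} (hw : ‖w‖ ≤ 1 / 2) :
    ‖Complex.log (1 - w)‖ ≤ 3 / 2 * ‖w‖ := by
  simpa [sub_eq_add_neg] using Complex.norm_log_one_add_half_le_self (z := -w) (by simpa using hw)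

theorem integrable_log_one_sub_conj_mul {α : Type*} [MeasurableSpace α] {μ : Measure α}
    {g h : α → ℂ} (hg : MemLp g 2 μ) (hh : MemLp h 2 μ)
    (hgh : ∀ᵐ x ∂μ, ‖(starRingEnd ℂ) (g x) * h x‖ ≤ 1 / 2) :
    Integrable (fun x => Complex.log (1 - (starRingEnd ℂ) (g x) * h x)) μ := by
  have hprod : Integrable (fun x => (starRingEnd ℂ) (g x) * h x) μ :=
    hg.star.integrable_mul hh
  refine (hprod.norm.const_mul (3 / 2)).mono' ?_ ?_
  · exact (Complex.measurable_log.comp_aemeasurable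
      (aemeasurable_const.sub hprod.aemeasurable)).aestronglyMeasurable
  · filter_upwards [hgh] with x hx
    exact norm_log_one_sub_le hx

theorem ae_norm_lt_of_eLpNorm_top_lt {α E : Type*} [MeasurableSpace α] {μ : Measure α}
    [NormedAddCommGroup E] {f : α → E} {C : ℝ} (hf : eLpNorm f ∞ μ < ENNReal.ofReal C) :
    ∀ᵐ x ∂μ, ‖f x‖ < C := by
  rw [eLpNorm_exponent_top] at hf
  filter_upwards [ae_le_eLpNormEssSup (f := f) (μ := μ)] with x hx
  rw [← ofReal_norm] at hx
  exact (ENNReal.ofReal_lt_ofReal_iff_of_nonneg (norm_nonneg _)).1 (hx.trans_lt hf)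

/-- The matrix `a_{ij} = -∫ log(1 - conj(f_i) f_j)` is positive semidefinite for
`f_i ∈ L² ∩ L^∞` with `‖f_i‖_∞ < 1/2`. -/
theorem stmt6 {d N : ℕ} (f : Fin N → (Fin d → ℝ) → ℂ)
    (hf2 : ∀ i, MemLp (f i) 2 volume)
    (hfI : ∀ i, eLpNorm (f i) ⊤ volume < 1 / 2) :
    (Matrix.of fun i j : Fin N =>
      -∫ x, Complex.log (1 - (starRingEnd ℂ) (f i x) * f j x)).PosSemidef := by
  have hbound : ∀ᵐ x, ∀ i, ‖f i x‖ < 1 / 2 :=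
    ae_all_iff.2 fun i => ae_norm_lt_of_eLpNorm_top_lt (by simpa using hfI i)
  have hconj_mul : ∀ᵐ x, ∀ i j, ‖(starRingEnd ℂ) (f i x) * f j x‖ ≤ 1 / 2 := by
    filter_upwards [hbound] with x hx i j
    rw [norm_mul, Complex.norm_conj]
    nlinarith [norm_nonneg (f i x), norm_nonneg (f j x), hx i, hx j]
  have hint : ∀ i j,
      Integrable (fun x => Complex.log (1 - (starRingEnd ℂ) (f i x) * f j x)) volume :=
    fun i j => integrable_log_one_sub_conj_mul (hf2 i) (hf2 j) <| by
      filter_upwards [hconj_mul] with x hx using hx i j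
  have hpsd := PosSemidef.integral
      (A := fun x => of fun i j => -Complex.log (1 - (starRingEnd ℂ) (f i x) * f j x))
      (fun i j => (hint i j).neg) <| by
    filter_upwards [hbound] with x hx
    exact posSemidef_neg_log_one_sub_conj_mul fun i => (hx i).trans (by norm_num)
  simpa only [of_apply, integral_neg] using hpsd
end

section
/- Let f ∈ L²(ℝ^d) ∩ L^∞(ℝ^d), c > 0, and let s(n) ≥ 0 satisfy s(0)=1 and the recursion s(n) = c ∑_{k=0}^{n-1} 2^{2k+1} (n!(n-1)!/((n-k-1)!)²) ‖f^{k+1}‖₂² s(n-k-1). If ‖f‖_∞ < 1/2, then the series ∑_{n≥0} s(n)/(n!)² converges. -/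
open MeasureTheory Filter Topology Finset Nat
open scoped ENNReal

/-!
Write `I k = ∫ ‖f‖ ^ (2 k)`. Since `‖f‖ ≤ M := ‖f‖_∞` a.e., `I (k + 2) ≤ M² I (k + 1)`.
After splitting off its `k = 0` summand, the recursion for `s (n + 1)` is dominated term by
term by `4 M² (n + 1) n` times the recursion for `s n`, so
`s (n + 1) ≤ (n + 1) (2 c I 1 + 4 M² n) s n`. Thus `t n = s n / (n!)²` satisfies
`t (n + 1) ≤ (2 c I 1 + 4 M² n) / (n + 1) · t n`, with ratio tending to `4 M² < 1`.
-/

theorem summable_of_succ_le_mul_of_tendsto {t r : ℕ → ℝ} {ρ : ℝ} (ht : ∀ n, 0 ≤ t n)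
    (hr : Tendsto r atTop (𝓝 ρ)) (hρ : ρ < 1) (h : ∀ n, t (n + 1) ≤ r n * t n) :
    Summable t := by
  obtain ⟨ρ', hρρ', hρ'⟩ := exists_between hρ
  refine summable_of_ratio_norm_eventually_le hρ' ?_
  filter_upwards [hr.eventually_le_const hρρ'] with n hn
  rw [Real.norm_of_nonneg (ht _), Real.norm_of_nonneg (ht _)]
  exact (h n).trans (mul_le_mul_of_nonneg_right hn (ht n))

theorem tendsto_add_mul_natCast_div_succ (a b : ℝ) :
    Tendsto (fun n : ℕ => (a + b * n) / (n + 1)) atTop (𝓝 b) := by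
  have h := (tendsto_one_div_add_atTop_nhds_zero_nat.const_mul a).add
    ((tendsto_natCast_div_add_atTop (1 : ℝ)).const_mul b)
  rw [mul_zero, mul_one, zero_add] at h
  refine h.congr fun n => ?_
  field_simp

theorem div_factorial_sq_succ_le {s : ℕ → ℝ} {a b : ℝ} {n : ℕ}
    (h : s (n + 1) ≤ (n + 1) * (a + b * n) * s n) :
    s (n + 1) / ((n + 1)! : ℝ) ^ 2 ≤ (a + b * n) / (n + 1) * (s n / (n ! : ℝ) ^ 2) := by
  have : (0 : ℝ) < n ! := by positivity
  rw [factorial_succ, cast_mul, div_le_iff₀ (by positivity)]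
  refine h.trans_eq ?_
  push_cast
  field_simp

/-- `I k` stands for `‖f ^ k‖₂²`. -/
noncomputable def recursionTerm (I s : ℕ → ℝ) (n k : ℕ) : ℝ :=
  2 ^ (2 * k + 1) * ((n ! * (n - 1)! : ℝ) / ((n - k - 1)! : ℝ) ^ 2) * I (k + 1) * s (n - k - 1)

section Recursion

variable {c q : ℝ} {I s : ℕ → ℝ}

theorem recursionTerm_succ_zero (n : ℕ) :
    recursionTerm I s (n + 1) 0 = 2 * (n + 1) * I 1 * s n := by
  have : (n ! : ℝ) ≠ 0 := by positivity
  simp only [recursionTerm, Nat.add_sub_cancel, Nat.sub_zero, factorial_succ, cast_mul]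
  field_simp
  push_cast
  ring

theorem recursionTerm_succ_succ_le (hs : ∀ n, 0 ≤ s n) (hI : ∀ k, I (k + 2) ≤ q * I (k + 1))
    (n k : ℕ) :
    recursionTerm I s (n + 2) (k + 1) ≤
      4 * q * (n + 2) * (n + 1) * recursionTerm I s (n + 1) k := by
  set a := 2 ^ (2 * k + 1) * (((n + 1)! * n ! : ℝ) / ((n - k)! : ℝ) ^ 2) * s (n - k)
  have ha : 0 ≤ a := by
    have := hs (n - k)
    positivity
  have hfac : ((n + 2)! * (n + 1)! : ℝ) = (n + 2) * (n + 1) * ((n + 1)! * n !) := by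
    push_cast [factorial_succ]
    ring
  calc recursionTerm I s (n + 2) (k + 1) = 4 * (n + 2) * (n + 1) * a * I (k + 2) := by
        rw [recursionTerm, show n + 2 - (k + 1) - 1 = n - k by omega,
          show n + 2 - 1 = n + 1 from rfl, hfac]
        ring
    _ ≤ 4 * (n + 2) * (n + 1) * a * (q * I (k + 1)) := by
        gcongr
        exact hI k
    _ = 4 * q * (n + 2) * (n + 1) * recursionTerm I s (n + 1) k := by
        rw [recursionTerm, show n + 1 - k - 1 = n - k by omega, Nat.add_sub_cancel]
        ring

theorem mul_sum_recursionTerm_succ_le (hs : ∀ n, 0 ≤ s n) (hc : 0 ≤ c)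
    (hI : ∀ k, I (k + 2) ≤ q * I (k + 1))
    (hrec : ∀ n, 1 ≤ n → s n = c * ∑ k ∈ range n, recursionTerm I s n k) (n : ℕ) :
    c * ∑ k ∈ range n, recursionTerm I s (n + 1) (k + 1) ≤ 4 * q * (n + 1) * n * s n := by
  cases n with
  | zero => simp
  | succ m =>
    rw [hrec (m + 1) (by omega), mul_sum, mul_sum, mul_sum]
    refine sum_le_sum fun k _ => ?_
    push_cast
    linarith [mul_le_mul_of_nonneg_left (recursionTerm_succ_succ_le hs hI m k) hc]

theorem succ_le_of_recursion (hs : ∀ n, 0 ≤ s n) (hc : 0 ≤ c)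
    (hI : ∀ k, I (k + 2) ≤ q * I (k + 1))
    (hrec : ∀ n, 1 ≤ n → s n = c * ∑ k ∈ range n, recursionTerm I s n k) (n : ℕ) :
    s (n + 1) ≤ (n + 1) * (2 * c * I 1 + 4 * q * n) * s n := by
  rw [hrec (n + 1) (by omega), sum_range_succ', recursionTerm_succ_zero, mul_add]
  linarith [mul_sum_recursionTerm_succ_le hs hc hI hrec n]

theorem summable_div_factorial_sq_of_recursion (hs : ∀ n, 0 ≤ s n) (hc : 0 ≤ c)
    (hI : ∀ k, I (k + 2) ≤ q * I (k + 1))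
    (hrec : ∀ n, 1 ≤ n → s n = c * ∑ k ∈ range n, recursionTerm I s n k)
    (hq : 4 * q < 1) :
    Summable fun n => s n / (n ! : ℝ) ^ 2 :=
  summable_of_succ_le_mul_of_tendsto (fun n => by have := hs n; positivity)
    (tendsto_add_mul_natCast_div_succ (2 * c * I 1) (4 * q)) hq
    fun n => div_factorial_sq_succ_le (succ_le_of_recursion hs hc hI hrec n)

end Recursion

theorem ae_norm_le_toReal_eLpNorm_top {α E : Type*} [MeasurableSpace α] {μ : Measure α}
    [NormedAddCommGroup E] {f : α → E} (hf : eLpNorm f ∞ μ ≠ ∞) :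
    ∀ᵐ x ∂μ, ‖f x‖ ≤ (eLpNorm f ∞ μ).toReal := by
  filter_upwards [ae_le_eLpNormEssSup (f := f) (μ := μ)] with x hx
  rw [eLpNorm_exponent_top] at hf ⊢
  rw [← toReal_enorm]
  exact ENNReal.toReal_mono hf hx

section Integrals

variable {α E : Type*} [MeasurableSpace α] {μ : Measure α} [NormedAddCommGroup E]
  {f : α → E} {M : ℝ}

theorem integrable_norm_pow_two_mul_succ (hf : MemLp f 2 μ) (hM : ∀ᵐ x ∂μ, ‖f x‖ ≤ M)
    (k : ℕ) :
    Integrable (fun x => ‖f x‖ ^ (2 * (k + 1))) μ := by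
  have h2 : Integrable (fun x => ‖f x‖ ^ 2) μ := hf.integrable_norm_pow two_ne_zero
  have hm : AEStronglyMeasurable (fun x => ‖f x‖ ^ (2 * k)) μ :=
    hf.aestronglyMeasurable.norm.pow _
  refine (h2.bdd_mul (c := M ^ (2 * k)) hm ?_).congr (.of_forall fun x => by ring)
  filter_upwards [hM] with x hx
  rw [Real.norm_of_nonneg (by positivity)]
  exact pow_le_pow_left₀ (norm_nonneg _) hx _

theorem integral_norm_pow_two_mul_succ_succ_le (hf : MemLp f 2 μ) (hM : ∀ᵐ x ∂μ, ‖f x‖ ≤ M)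
    (k : ℕ) :
    ∫ x, ‖f x‖ ^ (2 * (k + 2)) ∂μ ≤ M ^ 2 * ∫ x, ‖f x‖ ^ (2 * (k + 1)) ∂μ := by
  rw [← integral_const_mul]
  refine integral_mono_of_nonneg (.of_forall fun x => by positivity)
    ((integrable_norm_pow_two_mul_succ hf hM k).const_mul _) ?_
  filter_upwards [hM] with x hx
  rw [show 2 * (k + 2) = 2 + 2 * (k + 1) by ring, pow_add]
  gcongr

end Integrals

theorem stmt8_general {d : ℕ} (f : (Fin d → ℝ) → ℂ) (c : ℝ) (hc : 0 < c)
    (hf2 : MemLp f 2 volume)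
    (hfI : eLpNorm f ⊤ volume < 1 / 2)
    (s : ℕ → ℝ) (hpos : ∀ n, 0 ≤ s n)
    (hrec : ∀ n : ℕ, 1 ≤ n → s n = c * ∑ k ∈ Finset.range n,
      (2 : ℝ) ^ (2 * k + 1) *
        ((Nat.factorial n * Nat.factorial (n - 1) : ℝ) / (Nat.factorial (n - k - 1) : ℝ) ^ 2) *
        (∫ x, ‖f x‖ ^ (2 * (k + 1))) * s (n - k - 1)) :
    Summable (fun n => s n / (Nat.factorial n : ℝ) ^ 2) := by
  have hfin : eLpNorm f ⊤ volume ≠ ⊤ := (hfI.trans_le le_top).ne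
  set M := (eLpNorm f ⊤ volume).toReal
  have hM : M < 1 / 2 := ((ENNReal.toReal_lt_toReal hfin (by simp)).2 hfI).trans_eq (by simp)
  have hM0 : 0 ≤ M := ENNReal.toReal_nonneg
  have hI := integral_norm_pow_two_mul_succ_succ_le hf2 (ae_norm_le_toReal_eLpNorm_top hfin)
  exact summable_div_factorial_sq_of_recursion (I := fun k => ∫ x, ‖f x‖ ^ (2 * k))
    hpos hc.le hI hrec (by nlinarith)

/-- Sufficiency half of the existence criterion for quadratic exponential vectors:
if `‖f‖_∞ < 1/2`, the series `∑ s n / (n!)²` converges, where `s n` satisfies the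
squared-norm recursion of `‖B_f^{+n}Φ‖²`. -/
theorem stmt8 {d : ℕ} (f : (Fin d → ℝ) → ℂ) (c : ℝ) (hc : 0 < c)
    (hf2 : MemLp f 2 volume)
    (hfI : eLpNorm f ⊤ volume < 1 / 2)
    (s : ℕ → ℝ) (hpos : ∀ n, 0 ≤ s n) (hs0 : s 0 = 1)
    (hrec : ∀ n : ℕ, 1 ≤ n → s n = c * ∑ k ∈ Finset.range n,
      (2 : ℝ) ^ (2 * k + 1) *
        ((Nat.factorial n * Nat.factorial (n - 1) : ℝ) / (Nat.factorial (n - k - 1) : ℝ) ^ 2) *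
        (∫ x, ‖f x‖ ^ (2 * (k + 1))) * s (n - k - 1)) :
    Summable (fun n => s n / (Nat.factorial n : ℝ) ^ 2) :=
  stmt8_general f c hc hf2 hfI s hpos hrec
end

section
/- Let ρ, σ ∈ ℂ with |ρ|, |σ| < 1/2, let c > 0 and t ≥ 0, and define P(n,t) by P(0,t) = 1 and P(n,t) = 4 conj(ρ)σ (ct/(2n) + (n-1)/n) P(n-1,t). Then F(t) := ∑_{n≥0} P(n,t) converges absolutely, satisfies F(t+s) = F(t)F(s), and F(t) = exp(-(ct/2) log(1 - 4 conj(ρ)σ)) = (1 - 4 conj(ρ)σ)^{-ct/2}. -/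
/-!
Unwinding the recursion, `P n t = (a)ₙ / n! · zⁿ = Ring.multichoose a n · zⁿ` with `a = ct/2`
and `z = 4 conj(ρ)σ`. Since `‖z‖ < 1`, `∑ P n t` is the generalized binomial series of
`(1 - z)^(-a)`, which converges absolutely on the unit disc. Multiplicativity in `t` is then
`cpow_add`, and the exponential form is the definition of `cpow`.
-/

open Complex

theorem Ring.natCast_succ_mul_multichoose_succ {K : Type*} [Field K] [CharZero K] (a : K)
    (n : ℕ) : (n + 1 : K) * Ring.multichoose a (n + 1) = (a + n) * Ring.multichoose a n := by
  have factorial_mul (m : ℕ) :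
      (m.factorial : K) * Ring.multichoose a m = (ascPochhammer K m).eval a := by
    rw [← nsmul_eq_mul, Ring.factorial_nsmul_multichoose_eq_ascPochhammer,
      Polynomial.ascPochhammer_smeval_cast, Polynomial.ascPochhammer_smeval_eq_eval]
  have hn : (n.factorial : K) ≠ 0 := by exact_mod_cast n.factorial_ne_zero
  apply mul_left_cancel₀ hn
  calc (n.factorial : K) * ((n + 1 : K) * Ring.multichoose a (n + 1))
      = ((n + 1).factorial : K) * Ring.multichoose a (n + 1) := by
        push_cast [Nat.factorial_succ]; ring
    _ = (n.factorial : K) * ((a + n) * Ring.multichoose a n) := by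
        rw [factorial_mul, ascPochhammer_succ_eval, ← factorial_mul]; ring

theorem Complex.hasFPowerSeriesOnBall_one_sub_cpow_neg (a : ℂ) :
    HasFPowerSeriesOnBall (fun z ↦ (1 - z) ^ (-a))
      (.ofScalars ℂ fun n ↦ Ring.multichoose a n) 0 1 := by
  simpa [Ring.multichoose_eq, ← cpow_neg] using one_div_one_sub_cpow_hasFPowerSeriesOnBall_zero a

theorem mem_eball_zero_one_of_norm_lt_one {E : Type*} [SeminormedAddCommGroup E] {z : E}
    (hz : ‖z‖ < 1) : z ∈ Metric.eball (0 : E) 1 := by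
  rw [← ENNReal.ofReal_one, Metric.eball_ofReal]
  simpa using hz

theorem Complex.hasSum_multichoose_mul_pow (a : ℂ) {z : ℂ} (hz : ‖z‖ < 1) :
    HasSum (fun n ↦ Ring.multichoose a n * z ^ n) ((1 - z) ^ (-a)) := by
  simpa [FormalMultilinearSeries.ofScalars_apply_eq, mul_comm] using
    (hasFPowerSeriesOnBall_one_sub_cpow_neg a).hasSum (mem_eball_zero_one_of_norm_lt_one hz)

theorem Complex.summable_norm_multichoose_mul_pow (a : ℂ) {z : ℂ} (hz : ‖z‖ < 1) :
    Summable (fun n ↦ ‖Ring.multichoose a n * z ^ n‖) := by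
  simpa [FormalMultilinearSeries.ofScalars_apply_eq, mul_comm] using
    FormalMultilinearSeries.summable_norm_apply _ <| Metric.eball_subset_eball
      (hasFPowerSeriesOnBall_one_sub_cpow_neg a).r_le (mem_eball_zero_one_of_norm_lt_one hz)

theorem eq_multichoose_mul_pow_of_succ_mul {K : Type*} [Field K] [CharZero K] {a z : K}
    {Q : ℕ → K} (h0 : Q 0 = 1)
    (hsucc : ∀ n : ℕ, (n + 1 : K) * Q (n + 1) = (a + n) * z * Q n) (n : ℕ) :
    Q n = Ring.multichoose a n * z ^ n := by
  induction n with
  | zero => simp [h0]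
  | succ n ih =>
    apply mul_left_cancel₀ (Nat.cast_add_one_ne_zero n : (n + 1 : K) ≠ 0)
    rw [hsucc, ih, ← mul_assoc (n + 1 : K), Ring.natCast_succ_mul_multichoose_succ]
    ring

theorem stmt12_general (ρ σ : ℂ) (hρ : ‖ρ‖ < 1 / 2) (hσ : ‖σ‖ < 1 / 2)
    (c : ℝ) (P : ℕ → ℝ → ℂ)
    (hP0 : ∀ t : ℝ, P 0 t = 1)
    (hPrec : ∀ n : ℕ, 1 ≤ n → ∀ t : ℝ, P n t =
      4 * (starRingEnd ℂ) ρ * σ *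
        (((c * t / (2 * n) : ℝ) : ℂ) + ((n : ℂ) - 1) / (n : ℂ)) * P (n - 1) t) :
    ∀ t s : ℝ, 0 ≤ t → 0 ≤ s →
      Summable (fun n => ‖P n t‖) ∧
      (∑' n, P n (t + s)) = (∑' n, P n t) * (∑' n, P n s) ∧
      (∑' n, P n t) =
        Complex.exp (((-(c * t / 2) : ℝ) : ℂ) * Complex.log (1 - 4 * (starRingEnd ℂ) ρ * σ)) ∧
      (∑' n, P n t) = (1 - 4 * (starRingEnd ℂ) ρ * σ) ^ ((-(c * t / 2) : ℝ) : ℂ) := by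
  intro t s _ _
  set z := 4 * (starRingEnd ℂ) ρ * σ
  have hz : ‖z‖ < 1 := by
    have : ‖z‖ = 4 * ‖ρ‖ * ‖σ‖ := by simp [z]
    nlinarith [norm_nonneg ρ, norm_nonneg σ]
  have hP (u : ℝ) (n : ℕ) : P n u = Ring.multichoose ((c * u / 2 : ℝ) : ℂ) n * z ^ n := by
    refine eq_multichoose_mul_pow_of_succ_mul (Q := (P · u)) (hP0 u) (fun m ↦ ?_) n
    rw [hPrec (m + 1) m.succ_pos u, Nat.add_sub_cancel]
    have : (m + 1 : ℂ) ≠ 0 := Nat.cast_add_one_ne_zero m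
    push_cast
    field_simp
    ring
  have hsum (u : ℝ) : (∑' n, P n u) = (1 - z) ^ ((-(c * u / 2) : ℝ) : ℂ) := by
    simpa [hP u] using (hasSum_multichoose_mul_pow ((c * u / 2 : ℝ) : ℂ) hz).tsum_eq
  have hz1 : 1 - z ≠ 0 := sub_ne_zero.mpr fun h ↦ by simp [← h] at hz
  refine ⟨by simpa only [hP t] using summable_norm_multichoose_mul_pow _ hz, ?_, ?_, hsum t⟩
  · rw [hsum, hsum, hsum, ← cpow_add _ _ hz1]
    push_cast
    ring_nf
  · rw [hsum, cpow_def_of_ne_zero hz1, mul_comm]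

/-- The scalar product of quadratic exponential vectors with constant test functions:
`F(t) = ∑ P n t` converges absolutely, is multiplicative in `t`, and equals
`exp(-(ct/2) log(1 - 4 conj(ρ)σ)) = (1 - 4 conj(ρ)σ)^(-ct/2)`. -/
theorem stmt12 (ρ σ : ℂ) (hρ : ‖ρ‖ < 1 / 2) (hσ : ‖σ‖ < 1 / 2)
    (c : ℝ) (hc : 0 < c) (P : ℕ → ℝ → ℂ)
    (hP0 : ∀ t : ℝ, P 0 t = 1)
    (hPrec : ∀ n : ℕ, 1 ≤ n → ∀ t : ℝ, P n t =
      4 * (starRingEnd ℂ) ρ * σ *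
        (((c * t / (2 * n) : ℝ) : ℂ) + ((n : ℂ) - 1) / (n : ℂ)) * P (n - 1) t) :
    ∀ t s : ℝ, 0 ≤ t → 0 ≤ s →
      Summable (fun n => ‖P n t‖) ∧
      (∑' n, P n (t + s)) = (∑' n, P n t) * (∑' n, P n s) ∧
      (∑' n, P n t) =
        Complex.exp (((-(c * t / 2) : ℝ) : ℂ) * Complex.log (1 - 4 * (starRingEnd ℂ) ρ * σ)) ∧
      (∑' n, P n t) = (1 - 4 * (starRingEnd ℂ) ρ * σ) ^ ((-(c * t / 2) : ℝ) : ℂ) :=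
  stmt12_general ρ σ hρ hσ c P hP0 hPrec
end

section
/- If A = (a_{ij}) is an N×N positive semidefinite complex matrix and λ ∈ ℂ^N satisfies ∑_{i,j} conj(λ_i) λ_j exp(a_{ij}) = 0, then ∑_{i,j} conj(λ_i) λ_j (a_{ij})^n = 0 for every n ≥ 0; in particular ∑_{i,j} conj(λ_i) λ_j a_{ij} = 0. -/
/-! Expanding `exp` entrywise, the hypothesis says that the series whose `n`-th term is the
quadratic form of the entrywise power `A^∘n` divided by `n!` sums to `0`. By the Schur product
theorem every `A^∘n` is positive semidefinite, so in the partial order of `ℂ` every term is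
nonnegative, and a nonnegative series summing to `0` vanishes termwise. -/

open scoped ComplexOrder Nat
open Finset

namespace Matrix

variable {ι 𝕜 : Type*} [Fintype ι] [RCLike 𝕜]

theorem PosSemidef.sum_conj_mul_mul_apply_nonneg {B : Matrix ι ι 𝕜} (hB : B.PosSemidef)
    (l : ι → 𝕜) : 0 ≤ ∑ i, ∑ j, starRingEnd 𝕜 (l i) * l j * B i j := by
  convert hB.dotProduct_mulVec_nonneg l using 1
  simp only [dotProduct, mulVec, Pi.star_apply, RCLike.star_def, mul_sum]
  exact sum_congr rfl fun i _ => sum_congr rfl fun j _ => by ring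

theorem PosSemidef.map_pow {A : Matrix ι ι 𝕜} (hA : A.PosSemidef) (n : ℕ) :
    (A.map (· ^ n)).PosSemidef := by
  induction n with
  | zero =>
    convert posSemidef_vecMulVec_self_star (fun _ : ι => (1 : 𝕜)) using 1
    ext i j
    simp [vecMulVec_apply]
  | succ n ih =>
    convert ih.hadamard hA using 1
    ext i j
    simp [pow_succ]

end Matrix

theorem hasSum_sum_conj_mul_mul_pow_div_factorial {ι : Type*} [Fintype ι]
    (A : Matrix ι ι ℂ) (l : ι → ℂ) :
    HasSum (fun n : ℕ => (∑ i, ∑ j, starRingEnd ℂ (l i) * l j * A i j ^ n) / n !)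
      (∑ i, ∑ j, starRingEnd ℂ (l i) * l j * Complex.exp (A i j)) := by
  simp only [sum_div, mul_div_assoc]
  refine hasSum_sum fun i _ => hasSum_sum fun j _ => HasSum.mul_left _ ?_
  rw [Complex.exp_eq_exp_ℂ]
  exact NormedSpace.expSeries_div_hasSum_exp (A i j)

/-- If `A` is positive semidefinite and the quadratic form of the entrywise exponential
vanishes at `λ`, then the quadratic form of every entrywise power of `A` vanishes at `λ`;
in particular `∑ conj(λ_i) λ_j a_{ij} = 0`. -/
theorem stmt18 {N : ℕ} (A : Matrix (Fin N) (Fin N) ℂ) (hA : A.PosSemidef)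
    (l : Fin N → ℂ)
    (h : ∑ i, ∑ j, (starRingEnd ℂ) (l i) * l j * Complex.exp (A i j) = 0) :
    (∀ n : ℕ, ∑ i, ∑ j, (starRingEnd ℂ) (l i) * l j * (A i j) ^ n = 0) ∧
      ∑ i, ∑ j, (starRingEnd ℂ) (l i) * l j * A i j = 0 := by
  have hsum := hasSum_sum_conj_mul_mul_pow_div_factorial A l
  rw [h] at hsum
  have hterms_nonneg (n : ℕ) :
      0 ≤ (∑ i, ∑ j, starRingEnd ℂ (l i) * l j * A i j ^ n) / n ! :=
    div_nonneg ((hA.map_pow n).sum_conj_mul_mul_apply_nonneg l) (by positivity)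
  have hpow (n : ℕ) : ∑ i, ∑ j, starRingEnd ℂ (l i) * l j * A i j ^ n = 0 := by
    have := congrFun ((hasSum_zero_iff_of_nonneg hterms_nonneg).1 hsum) n
    simpa [Nat.factorial_ne_zero] using this
  exact ⟨hpow, by simpa using hpow 1⟩
end

section
/- Let f ∈ L²(ℝ^d) ∩ L^∞(ℝ^d) with ‖f‖_∞ > 0, and let 0 ≤ δ < 1/(2‖f‖_∞). Then the power series t ↦ Ψ(tf) = ∑_{m≥0} (t^m/m!) B_f^{+m}Φ converges in the quadratic Fock space for 0 ≤ t < δ, is n-times differentiable in t term by term, and (d^n/dt^n)|_{t=0} Ψ(tf) = B_f^{+n}Φ. Consequently each B_f^{+n}Φ lies in the closed linear span of quadratic exponential vectors, i.e. the quadratic exponential vectors are total in the quadratic Fock space. -/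
/-!
The growth bound gives `‖v (m+1)‖ ≤ (m+1) cₘ ‖v m‖` with `cₘ → 2‖f‖_∞`, so by the ratio test the
exponential generating series `∑ (tᵐ/m!) v m` has radius at least `δ`. Its sum `Ψ` is therefore
analytic on `(-δ, δ)`, with `n`-th derivative `v n` at `0`. The quotient map by the closed span of
the values `Ψ t` kills `Ψ` near `0`, hence, by uniqueness of power series coefficients, kills every
coefficient `v n / n!`.
-/

open MeasureTheory Filter Topology Nat
open scoped NNReal ENNReal

theorem summable_of_norm_succ_le_of_tendsto {α : Type*} [SeminormedAddCommGroup α]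
    [CompleteSpace α] {a : ℕ → α} {c : ℕ → ℝ} {l : ℝ} (hl : l < 1) (hc : Tendsto c atTop (𝓝 l))
    (h : ∀ n, ‖a (n + 1)‖ ≤ c n * ‖a n‖) : Summable a := by
  obtain ⟨r, hlr, hr⟩ := exists_between hl
  refine summable_of_ratio_norm_eventually_le hr ?_
  filter_upwards [hc.eventually (eventually_le_nhds hlr)] with n hn
  exact (h n).trans (mul_le_mul_of_nonneg_right hn (norm_nonneg _))

theorem HasFPowerSeriesAt.iteratedDeriv_eq {𝕜 E : Type*} [NontriviallyNormedField 𝕜]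
    [NormedAddCommGroup E] [NormedSpace 𝕜 E] [CompleteSpace E] {F : 𝕜 → E}
    {p : FormalMultilinearSeries 𝕜 𝕜 E} {x : 𝕜} (hF : HasFPowerSeriesAt F p x) (n : ℕ) :
    iteratedDeriv n F x = n ! • p.coeff n := by
  obtain ⟨r, hr⟩ := hF
  rw [iteratedDeriv_eq_iteratedFDeriv, ← hr.factorial_smul]
  rfl

theorem HasFPowerSeriesAt.coeff_mem_topologicalClosure {𝕜 E : Type*}
    [NontriviallyNormedField 𝕜] [NormedAddCommGroup E] [NormedSpace 𝕜 E] {F : 𝕜 → E}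
    {p : FormalMultilinearSeries 𝕜 𝕜 E} {x : 𝕜} (hF : HasFPowerSeriesAt F p x)
    {K : Submodule 𝕜 E} (hK : ∀ᶠ t in 𝓝 x, F t ∈ K) (n : ℕ) :
    p.coeff n ∈ K.topologicalClosure := by
  have : IsClosed (K.topologicalClosure : Set E) := K.isClosed_topologicalClosure
  set π := K.topologicalClosure.mkQL
  obtain ⟨r, hr⟩ := hF
  have hπF : π ∘ F =ᶠ[𝓝 x] 0 := by
    filter_upwards [hK] with t ht
    simpa [π] using K.le_topologicalClosure ht
  have hzero := (π.comp_hasFPowerSeriesOnBall hr).hasFPowerSeriesAt.eq_zero_of_eventually hπF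
  have h := congr_arg (fun q : FormalMultilinearSeries 𝕜 𝕜 _ => q.coeff n) hzero
  simp only [FormalMultilinearSeries.coeff, ContinuousLinearMap.compFormalMultilinearSeries_apply,
    ContinuousLinearMap.compContinuousMultilinearMap_coe, Function.comp_apply] at h
  exact (Submodule.Quotient.mk_eq_zero _).mp h

/-- The square root is `√(4(m+1)m M² + 2(m+1)N²) / (m+1)`, the ratio bound coming from the
squared-norm estimate of the quadratic Fock vectors. -/
theorem tendsto_sqrt_growth_rate (M N : ℝ) (hM : 0 ≤ M) :
    Tendsto (fun m : ℕ => √(4 * M ^ 2 * (m / (m + 1)) + 2 * N ^ 2 * (1 / (m + 1)))) atTop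
      (𝓝 (2 * M)) := by
  have h := (((tendsto_natCast_div_add_atTop (1 : ℝ)).const_mul (4 * M ^ 2)).add
    (tendsto_one_div_add_atTop_nhds_zero_nat.const_mul (2 * N ^ 2))).sqrt
  convert h using 2
  rw [mul_one, mul_zero, add_zero, show 4 * M ^ 2 = (2 * M) ^ 2 by ring,
    Real.sqrt_sq (by positivity)]

section egfSeries

variable {E : Type*} [NormedAddCommGroup E]

theorem summable_pow_div_factorial_mul_norm {v : ℕ → E} {c : ℕ → ℝ} {L r : ℝ} (hr : 0 ≤ r)
    (hv : ∀ m : ℕ, ‖v (m + 1)‖ ≤ (m + 1) * c m * ‖v m‖) (hc : Tendsto c atTop (𝓝 L))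
    (hrL : r * L < 1) : Summable fun m => r ^ m / m ! * ‖v m‖ := by
  refine summable_of_norm_succ_le_of_tendsto hrL (hc.const_mul r) fun m => ?_
  rw [Real.norm_of_nonneg (by positivity), Real.norm_of_nonneg (by positivity)]
  calc r ^ (m + 1) / (m + 1)! * ‖v (m + 1)‖
      ≤ r ^ (m + 1) / (m + 1)! * ((m + 1) * c m * ‖v m‖) := by gcongr; exact hv m
    _ = r * c m * (r ^ m / m ! * ‖v m‖) := by
      rw [factorial_succ, cast_mul, pow_succ]; push_cast; field_simp

theorem norm_succ_le_mul_sqrt_growth_rate {v : ℕ → E} {M N : ℝ}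
    (h : ∀ m : ℕ,
      ‖v (m + 1)‖ ^ 2 ≤ (4 * (m + 1) * m * M ^ 2 + 2 * (m + 1) * N ^ 2) * ‖v m‖ ^ 2)
    (m : ℕ) :
    ‖v (m + 1)‖ ≤ (m + 1) * √(4 * M ^ 2 * (m / (m + 1)) + 2 * N ^ 2 * (1 / (m + 1))) * ‖v m‖ := by
  rw [← pow_le_pow_iff_left₀ (norm_nonneg _) (by positivity) two_ne_zero, mul_pow, mul_pow,
    Real.sq_sqrt (by positivity)]
  refine (h m).trans_eq ?_
  field_simp

variable [NormedSpace ℝ E]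

noncomputable def egfSeries (v : ℕ → E) : FormalMultilinearSeries ℝ ℝ E :=
  fun n => ContinuousMultilinearMap.mkPiRing ℝ (Fin n) ((n ! : ℝ)⁻¹ • v n)

theorem egfSeries_apply_diag (v : ℕ → E) (n : ℕ) (t : ℝ) :
    (egfSeries v n fun _ => t) = (t ^ n / n !) • v n := by
  simp [egfSeries, smul_smul, div_eq_mul_inv]

theorem factorial_smul_coeff_egfSeries (v : ℕ → E) (n : ℕ) :
    n ! • (egfSeries v).coeff n = v n := by
  have h := egfSeries_apply_diag v n 1
  rw [one_pow, one_div] at h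
  rw [FormalMultilinearSeries.coeff, ← Nat.cast_smul_eq_nsmul ℝ, Pi.one_def, h,
    smul_inv_smul₀ (by positivity)]

theorem norm_egfSeries (v : ℕ → E) (n : ℕ) : ‖egfSeries v n‖ = ‖v n‖ / n ! := by
  simp [egfSeries, norm_smul, div_eq_inv_mul]

theorem le_radius_egfSeries {v : ℕ → E} {r : ℝ≥0}
    (h : Summable fun m => (r : ℝ) ^ m / m ! * ‖v m‖) : (r : ℝ≥0∞) ≤ (egfSeries v).radius :=
  (egfSeries v).le_radius_of_summable <| by
    simp only [norm_egfSeries]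
    convert h using 2
    ring

theorem ofReal_le_radius_egfSeries {v : ℕ → E} {M N r : ℝ} (hM : 0 ≤ M)
    (hv : ∀ m : ℕ,
      ‖v (m + 1)‖ ^ 2 ≤ (4 * (m + 1) * m * M ^ 2 + 2 * (m + 1) * N ^ 2) * ‖v m‖ ^ 2)
    (hr : 0 ≤ r) (hrM : r * (2 * M) < 1) : ENNReal.ofReal r ≤ (egfSeries v).radius :=
  le_radius_egfSeries <| by
    simpa [Real.coe_toNNReal _ hr] using summable_pow_div_factorial_mul_norm hr
      (norm_succ_le_mul_sqrt_growth_rate hv) (tendsto_sqrt_growth_rate M N hM) hrM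

end egfSeries

theorem stmt19_general {d : ℕ} {H : Type*} [NormedAddCommGroup H] [InnerProductSpace ℂ H]
    [CompleteSpace H]
    (f : (Fin d → ℝ) → ℂ)
    (hfpos : 0 < (eLpNorm f ⊤ volume).toReal)
    (v : ℕ → H)
    (hnorm : ∀ m : ℕ, 1 ≤ m →
      ‖v m‖ ^ 2 ≤ (4 * m * ((m : ℝ) - 1) * (eLpNorm f ⊤ volume).toReal ^ 2 +
          2 * m * (eLpNorm f 2 volume).toReal ^ 2) * ‖v (m - 1)‖ ^ 2)
    (δ : ℝ) (hδ0 : 0 < δ) (hδ : δ < 1 / (2 * (eLpNorm f ⊤ volume).toReal)) :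
    (∀ t : ℝ, |t| < δ →
      Summable (fun m : ℕ => ((t ^ m / (Nat.factorial m : ℝ) : ℝ) : ℂ) • v m)) ∧
    (∀ n : ℕ, iteratedDerivWithin n
        (fun t : ℝ => ∑' m : ℕ, ((t ^ m / (Nat.factorial m : ℝ) : ℝ) : ℂ) • v m)
        (Set.Ioo (-δ) δ) 0 = v n) ∧
    (∀ n : ℕ, v n ∈ closure (Submodule.span ℂ
        {x : H | ∃ t : ℝ, |t| < δ ∧
          x = ∑' m : ℕ, ((t ^ m / (Nat.factorial m : ℝ) : ℝ) : ℂ) • v m} : Set H)) := by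
  set M := (eLpNorm f ⊤ volume).toReal
  set N := (eLpNorm f 2 volume).toReal
  have hv (m : ℕ) :
      ‖v (m + 1)‖ ^ 2 ≤ (4 * (m + 1) * m * M ^ 2 + 2 * (m + 1) * N ^ 2) * ‖v m‖ ^ 2 := by
    simpa using hnorm (m + 1) (by omega)
  have hδM : δ * (2 * M) < 1 := by
    rw [lt_div_iff₀ (by positivity)] at hδ
    linarith
  have hradius : ENNReal.ofReal δ ≤ (egfSeries v).radius :=
    ofReal_le_radius_egfSeries ENNReal.toReal_nonneg hv hδ0.le hδM
  have hδpos : 0 < ENNReal.ofReal δ := ENNReal.ofReal_pos.2 hδ0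
  have hΨ : HasFPowerSeriesOnBall (egfSeries v).sum (egfSeries v) 0 (ENNReal.ofReal δ) :=
    ((egfSeries v).hasFPowerSeriesOnBall (hradius.trans_lt' hδpos)).mono hδpos hradius
  have hsum (t : ℝ) : ∑' m, ((t ^ m / m ! : ℝ) : ℂ) • v m = (egfSeries v).sum t := by
    simp only [Complex.coe_smul, ← egfSeries_apply_diag]
    rfl
  have h0 : (0 : ℝ) ∈ Set.Ioo (-δ) δ := ⟨by linarith, hδ0⟩
  simp only [hsum]
  refine ⟨fun t ht => ?_, fun n => ?_, fun n => ?_⟩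
  · have ht' : t ∈ Metric.eball (0 : ℝ) (ENNReal.ofReal δ) := by simpa using ht
    simpa only [Complex.coe_smul, egfSeries_apply_diag, zero_add] using (hΨ.hasSum ht').summable
  · rw [iteratedDerivWithin_of_isOpen isOpen_Ioo h0, hΨ.hasFPowerSeriesAt.iteratedDeriv_eq,
      factorial_smul_coeff_egfSeries]
  · -- `Ψ` is a power series over `ℝ`, so view the complex span as a real subspace
    rw [← Submodule.coe_restrictScalars ℝ, ← Submodule.topologicalClosure_coe,
      ← factorial_smul_coeff_egfSeries v n]
    refine nsmul_mem (hΨ.hasFPowerSeriesAt.coeff_mem_topologicalClosure ?_ n) _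
    filter_upwards [isOpen_Ioo.mem_nhds h0] with t ht
    exact Submodule.subset_span ⟨t, abs_lt.2 ht, rfl⟩

/-- Totality of quadratic exponential vectors. Abstractly: `v f m` models `B_f^{+m}Φ` in
the quadratic Fock space `H`, satisfying the squared-norm growth bound
`‖v f m‖² ≤ (4m(m-1)‖f‖_∞² + 2m‖f‖₂²)‖v f (m-1)‖²`. Then for `0 < δ < 1/(2‖f‖_∞)`,
the series `Ψ(tf) = ∑ (tᵐ/m!) v f m` converges for `|t| < δ`, its `n`-th derivative at
`t = 0` equals `v f n`, and each `v f n` lies in the closed linear span of the quadratic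
exponential vectors. -/
theorem stmt19 {d : ℕ} {H : Type*} [NormedAddCommGroup H] [InnerProductSpace ℂ H]
    [CompleteSpace H]
    (f : (Fin d → ℝ) → ℂ)
    (hf2 : MemLp f 2 volume) (hfI : MemLp f ⊤ volume)
    (hfpos : 0 < (eLpNorm f ⊤ volume).toReal)
    (v : ℕ → H)
    (hnorm : ∀ m : ℕ, 1 ≤ m →
      ‖v m‖ ^ 2 ≤ (4 * m * ((m : ℝ) - 1) * (eLpNorm f ⊤ volume).toReal ^ 2 +
          2 * m * (eLpNorm f 2 volume).toReal ^ 2) * ‖v (m - 1)‖ ^ 2)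
    (δ : ℝ) (hδ0 : 0 < δ) (hδ : δ < 1 / (2 * (eLpNorm f ⊤ volume).toReal)) :
    (∀ t : ℝ, |t| < δ →
      Summable (fun m : ℕ => ((t ^ m / (Nat.factorial m : ℝ) : ℝ) : ℂ) • v m)) ∧
    (∀ n : ℕ, iteratedDerivWithin n
        (fun t : ℝ => ∑' m : ℕ, ((t ^ m / (Nat.factorial m : ℝ) : ℝ) : ℂ) • v m)
        (Set.Ioo (-δ) δ) 0 = v n) ∧
    (∀ n : ℕ, v n ∈ closure (Submodule.span ℂ
        {x : H | ∃ t : ℝ, |t| < δ ∧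
          x = ∑' m : ℕ, ((t ^ m / (Nat.factorial m : ℝ) : ℝ) : ℂ) • v m} : Set H)) :=
  stmt19_general f hfpos v hnorm δ hδ0 hδ
end
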